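/- arXiv:1205.6786 — 2 statements merged into one kernel-verified Lean document; each statement's English description precedes it below -/
import Mathlib

section
/- If f₀ is an extremal function for the p-modulus mod_p(F), then f₀ > 0 μ-almost everywhere on X. -/
open MeasureTheory ENNReal

/-- `f` is admissible for the subfamily `S ⊆ Λ` of leaves: `f` is a nonnegative measurable
function in `L^p(μ)` whose integral over the leaf `ν l` is at least `1` for
`π_*μ`-almost every `l ∈ S`. -/
def IsAdmissible {X Λ : Type*} [MeasurableSpace X] [MeasurableSpace Λ]
    (μ : MeasureTheory.Measure X) (ν : Λ → MeasureTheory.Measure X) (π : X → Λ) (p : ℝ)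
    (S : Set Λ) (f : X → ℝ) : Prop :=
  Measurable f ∧ (∀ x, 0 ≤ f x) ∧ MemLp f (ENNReal.ofReal p) μ ∧
    ∀ᵐ l ∂(μ.map π), l ∈ S → 1 ≤ ∫⁻ x, ENNReal.ofReal (f x) ∂(ν l)

/-- The `p`-modulus of the subfamily `S ⊆ Λ` of leaves: the infimum of the `L^p(μ)`-norms
of functions admissible for `S` (equal to `∞` when no admissible function exists). -/
noncomputable def pModulus {X Λ : Type*} [MeasurableSpace X] [MeasurableSpace Λ]
    (μ : MeasureTheory.Measure X) (ν : Λ → MeasureTheory.Measure X) (π : X → Λ) (p : ℝ)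
    (S : Set Λ) : ℝ≥0∞ :=
  ⨅ (f : X → ℝ) (_ : IsAdmissible μ ν π p S f), eLpNorm f (ENNReal.ofReal p) μ

/-- `f₀` is an extremal function for the `p`-modulus of the foliation (the whole family `Λ`):
it is admissible for `Λ` and its `L^p(μ)`-norm realizes `mod_p(F)`. -/
def IsExtremal {X Λ : Type*} [MeasurableSpace X] [MeasurableSpace Λ]
    (μ : MeasureTheory.Measure X) (ν : Λ → MeasureTheory.Measure X) (π : X → Λ) (p : ℝ)
    (f₀ : X → ℝ) : Prop :=
  IsAdmissible μ ν π p Set.univ f₀ ∧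
    eLpNorm f₀ (ENNReal.ofReal p) μ = pModulus μ ν π p Set.univ

/-! Suppose `f₀` vanishes on a set `Z` of positive finite measure. By the coarea formula a set
that every leaf meets in measure zero is `μ`-null, so for some `n` the union `P = π⁻¹ A` of the
leaves meeting `Z` in mass at least `1 / n` has positive measure. Replacing `f₀` on `P` by `n · 1_Z`
gives an admissible `g`, and since `f₀` and `g` have disjoint supports on `P`, the `p`-energy of
`(1 - t) f₀ + t g` on `P` is `(1 - t)^p I + t^p n^p μ(Z ∩ P)`, where `I > 0` is that of `f₀` (an
admissible function cannot vanish on `P`). For `p > 1` and small `t > 0` this is `< I`,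
contradicting extremality. -/

open Filter Set Topology

lemma exists_one_sub_rpow_mul_add_rpow_mul_lt {p a b : ℝ} (hp : 1 < p) (ha : 0 < a) :
    ∃ t ∈ Ioo (0 : ℝ) 1, (1 - t) ^ p * a + t ^ p * b < a := by
  have hlim : Tendsto (fun t : ℝ => t ^ (p - 1) * b) (𝓝[>] 0) (𝓝 0) := by
    have h := (Real.continuousAt_rpow_const 0 (p - 1) (Or.inr (by linarith))).tendsto.mul_const b
    rw [Real.zero_rpow (by linarith), zero_mul] at h
    exact h.mono_left nhdsWithin_le_nhds
  have h01 : ∀ᶠ t in 𝓝[>] (0 : ℝ), t ∈ Ioo 0 1 := Ioo_mem_nhdsGT one_pos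
  obtain ⟨t, ht, htb⟩ := (h01.and (hlim.eventually (gt_mem_nhds ha))).exists
  refine ⟨t, ht, ?_⟩
  have hpow : t ^ p = t * t ^ (p - 1) := by
    rw [← Real.rpow_one_add' ht.1.le (by linarith)]
    ring_nf
  calc (1 - t) ^ p * a + t ^ p * b
      ≤ (1 - t) * a + t * (t ^ (p - 1) * b) := by
        rw [hpow, mul_assoc]
        gcongr
        exact Real.rpow_le_self_of_le_one (by linarith [ht.2]) (by linarith [ht.1]) hp.le
    _ < (1 - t) * a + t * a := by gcongr; exact ht.1
    _ = a := by ring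

lemma ENNReal.exists_ofReal_one_sub_rpow_mul_add_ofReal_rpow_mul_lt {p : ℝ} (hp : 1 < p)
    {a b : ℝ≥0∞} (ha₀ : a ≠ 0) (ha : a ≠ ∞) (hb : b ≠ ∞) :
    ∃ t ∈ Ioo (0 : ℝ) 1, ENNReal.ofReal (1 - t) ^ p * a + ENNReal.ofReal t ^ p * b < a := by
  obtain ⟨t, ht, hlt⟩ :=
    exists_one_sub_rpow_mul_add_rpow_mul_lt (b := b.toReal) hp (ENNReal.toReal_pos ha₀ ha)
  have h1t : 0 ≤ 1 - t := by linarith [ht.2]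
  refine ⟨t, ht, ?_⟩
  rwa [← ENNReal.ofReal_toReal ha, ← ENNReal.ofReal_toReal hb,
    ENNReal.ofReal_rpow_of_nonneg h1t (by linarith),
    ENNReal.ofReal_rpow_of_nonneg ht.1.le (by linarith),
    ← ENNReal.ofReal_mul (Real.rpow_nonneg h1t p),
    ← ENNReal.ofReal_mul (Real.rpow_nonneg ht.1.le p),
    ← ENNReal.ofReal_add (by positivity)
      (mul_nonneg (Real.rpow_nonneg ht.1.le p) ENNReal.toReal_nonneg),
    ENNReal.ofReal_lt_ofReal_iff (ENNReal.toReal_pos ha₀ ha)]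

section Energy

variable {X : Type*} [MeasurableSpace X] {μ : Measure X} {p : ℝ}

lemma eLpNorm_ofReal_eq_lintegral_ofReal_rpow (hp : 0 < p) {f : X → ℝ} (hf : ∀ x, 0 ≤ f x) :
    eLpNorm f (ENNReal.ofReal p) μ = (∫⁻ x, ENNReal.ofReal (f x) ^ p ∂μ) ^ (1 / p) := by
  rw [eLpNorm_eq_lintegral_rpow_enorm_toReal (by simpa using hp) ENNReal.ofReal_ne_top,
    ENNReal.toReal_ofReal hp.le]
  simp_rw [Real.enorm_eq_ofReal (hf _)]

lemma lintegral_ofReal_rpow_ne_top (hp : 0 < p) {f : X → ℝ} (hf : ∀ x, 0 ≤ f x)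
    (hfp : MemLp f (ENNReal.ofReal p) μ) : ∫⁻ x, ENNReal.ofReal (f x) ^ p ∂μ ≠ ∞ := by
  have h := hfp.eLpNorm_ne_top
  rwa [eLpNorm_ofReal_eq_lintegral_ofReal_rpow hp hf, ne_eq,
    ENNReal.rpow_eq_top_iff_of_pos (by positivity)] at h

lemma lintegral_ofReal_rpow_convexComb {f g : X → ℝ} (hf : Measurable f) {P : Set X}
    (hP : MeasurableSet P) (hgf : EqOn g f Pᶜ) (hfg : ∀ x ∈ P, f x = 0 ∨ g x = 0) (hp : 0 < p)
    {t : ℝ} (ht₀ : 0 ≤ t) (ht₁ : t ≤ 1) :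
    ∫⁻ x, ENNReal.ofReal (((1 - t) • f + t • g) x) ^ p ∂μ =
      ∫⁻ x in Pᶜ, ENNReal.ofReal (f x) ^ p ∂μ +
        (ENNReal.ofReal (1 - t) ^ p * ∫⁻ x in P, ENNReal.ofReal (f x) ^ p ∂μ +
          ENNReal.ofReal t ^ p * ∫⁻ x in P, ENNReal.ofReal (g x) ^ p ∂μ) := by
  have h1t : 0 ≤ 1 - t := by linarith
  have hpow (a b : ℝ) (ha : 0 ≤ a) : ENNReal.ofReal (a * b) ^ p =
      ENNReal.ofReal a ^ p * ENNReal.ofReal b ^ p := by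
    rw [ENNReal.ofReal_mul ha, ENNReal.mul_rpow_of_nonneg _ _ hp.le]
  have hout : ∀ x ∈ Pᶜ, ENNReal.ofReal (((1 - t) • f + t • g) x) ^ p =
      ENNReal.ofReal (f x) ^ p := fun x hx => by
    simp only [Pi.add_apply, Pi.smul_apply, smul_eq_mul, hgf hx]
    ring_nf
  have hin : ∀ x ∈ P, ENNReal.ofReal (((1 - t) • f + t • g) x) ^ p =
      ENNReal.ofReal (1 - t) ^ p * ENNReal.ofReal (f x) ^ p +
        ENNReal.ofReal t ^ p * ENNReal.ofReal (g x) ^ p := fun x hx => by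
    simp only [Pi.add_apply, Pi.smul_apply, smul_eq_mul]
    rcases hfg x hx with h | h <;>
      simp [h, hpow _ _ h1t, hpow _ _ ht₀, ENNReal.zero_rpow_of_pos hp]
  rw [← lintegral_add_compl _ hP, add_comm, setLIntegral_congr_fun hP.compl hout,
    setLIntegral_congr_fun hP hin, lintegral_add_left ((hf.ennreal_ofReal.pow_const p).const_mul _),
    lintegral_const_mul' _ _ (by simp [hp.le]), lintegral_const_mul' _ _ (by simp [hp.le])]

lemma exists_lintegral_ofReal_rpow_convexComb_lt {f g : X → ℝ} (hf : Measurable f) {P : Set X}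
    (hP : MeasurableSet P) (hgf : EqOn g f Pᶜ) (hfg : ∀ x ∈ P, f x = 0 ∨ g x = 0) (hp : 1 < p)
    (hf_fin : ∫⁻ x, ENNReal.ofReal (f x) ^ p ∂μ ≠ ∞)
    (hg_fin : ∫⁻ x, ENNReal.ofReal (g x) ^ p ∂μ ≠ ∞)
    (hfP : ∫⁻ x in P, ENNReal.ofReal (f x) ^ p ∂μ ≠ 0) :
    ∃ t ∈ Ioo (0 : ℝ) 1, ∫⁻ x, ENNReal.ofReal (((1 - t) • f + t • g) x) ^ p ∂μ <
      ∫⁻ x, ENNReal.ofReal (f x) ^ p ∂μ := by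
  obtain ⟨t, ht, hlt⟩ := ENNReal.exists_ofReal_one_sub_rpow_mul_add_ofReal_rpow_mul_lt hp hfP
    (ne_top_of_le_ne_top hf_fin (setLIntegral_le_lintegral _ _))
    (ne_top_of_le_ne_top hg_fin (setLIntegral_le_lintegral _ _))
  refine ⟨t, ht, ?_⟩
  rw [lintegral_ofReal_rpow_convexComb hf hP hgf hfg (by linarith) ht.1.le ht.2.le,
    ← lintegral_add_compl (μ := μ) _ hP, add_comm (∫⁻ x in P, _ ∂μ)]
  exact ENNReal.add_lt_add_left (ne_top_of_le_ne_top hf_fin (setLIntegral_le_lintegral _ _)) hlt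

end Energy

lemma Filter.Frequently.exists_nat_one_le_mul {α : Type*} {l : Filter α} [CountableInterFilter l]
    {F : α → ℝ≥0∞} (h : ∃ᶠ x in l, F x ≠ 0) : ∃ n : ℕ, ∃ᶠ x in l, 1 ≤ (n : ℝ≥0∞) * F x := by
  by_contra! hlt
  refine h (((eventually_countable_forall (ι := ℕ)).2 hlt).mono fun x hx hFx => ?_)
  obtain ⟨n, hn⟩ := ENNReal.exists_nat_mul_gt hFx one_ne_top
  exact (hx n).not_gt hn

section Leaves

variable {X Λ : Type*} [MeasurableSpace X] [MeasurableSpace Λ] {μ : Measure X}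
  {ν : Λ → Measure X} {π : X → Λ} {p : ℝ}

lemma convex_setOf_isAdmissible (S : Set Λ) : Convex ℝ {f | IsAdmissible μ ν π p S f} := by
  rintro f ⟨hfm, hf0, hfp, hf⟩ g ⟨hgm, hg0, hgp, hg⟩ a b ha hb hab
  refine ⟨(hfm.const_smul a).add (hgm.const_smul b), fun x => ?_,
    (hfp.const_smul a).add (hgp.const_smul b), ?_⟩
  · simp only [Pi.add_apply, Pi.smul_apply, smul_eq_mul]
    exact add_nonneg (mul_nonneg ha (hf0 x)) (mul_nonneg hb (hg0 x))
  filter_upwards [hf, hg] with l hfl hgl hl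
  have hsplit : ∀ x, ENNReal.ofReal ((a • f + b • g) x) =
      ENNReal.ofReal a * ENNReal.ofReal (f x) + ENNReal.ofReal b * ENNReal.ofReal (g x) :=
    fun x => by
      simp only [Pi.add_apply, Pi.smul_apply, smul_eq_mul]
      rw [ENNReal.ofReal_add (mul_nonneg ha (hf0 x)) (mul_nonneg hb (hg0 x)),
        ENNReal.ofReal_mul ha, ENNReal.ofReal_mul hb]
  simp_rw [hsplit]
  rw [lintegral_add_left (hfm.ennreal_ofReal.const_mul _), lintegral_const_mul _ hfm.ennreal_ofReal,
    lintegral_const_mul _ hgm.ennreal_ofReal]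
  calc (1 : ℝ≥0∞) = ENNReal.ofReal a * 1 + ENNReal.ofReal b * 1 := by
        rw [mul_one, mul_one, ← ENNReal.ofReal_add ha hb, hab, ENNReal.ofReal_one]
    _ ≤ _ := by gcongr; exacts [hfl hl, hgl hl]

lemma IsExtremal.lintegral_ofReal_rpow_le (hp : 0 < p) {f₀ f : X → ℝ}
    (hf₀ : IsExtremal μ ν π p f₀) (hf : IsAdmissible μ ν π p univ f) :
    ∫⁻ x, ENNReal.ofReal (f₀ x) ^ p ∂μ ≤ ∫⁻ x, ENNReal.ofReal (f x) ^ p ∂μ := by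
  have h : eLpNorm f₀ (ENNReal.ofReal p) μ ≤ eLpNorm f (ENNReal.ofReal p) μ :=
    hf₀.2 ▸ iInf₂_le f hf
  rwa [eLpNorm_ofReal_eq_lintegral_ofReal_rpow hp hf₀.1.2.1,
    eLpNorm_ofReal_eq_lintegral_ofReal_rpow hp hf.2.1,
    ENNReal.rpow_le_rpow_iff (by positivity)] at h

lemma measure_eq_zero_of_forall_leaf_eq_zero {σ : Measure Λ} {w : X → ℝ}
    (hcoarea : ∀ h : X → ℝ≥0∞, Measurable h →
      ∫⁻ x, h x ∂μ = ∫⁻ l, (∫⁻ x, h x * ENNReal.ofReal (w x) ∂(ν l)) ∂σ)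
    {B : Set X} (hB : MeasurableSet B) (hνB : ∀ l, ν l B = 0) : μ B = 0 := by
  rw [← lintegral_indicator_one hB, hcoarea _ (measurable_one.indicator hB)]
  refine lintegral_eq_zero_of_ae_eq_zero (.of_forall fun l => ?_)
  refine lintegral_eq_zero_of_ae_eq_zero ?_
  filter_upwards [measure_eq_zero_iff_ae_notMem.1 (hνB l)] with x hx
  simp [hx]

variable (hK : ∀ l, ν l {x | π x ≠ l} = 0)
include hK

lemma ae_restrict_leaf_measure_ne_zero (hπ : Measurable π) (hν : Measurable ν)
    (hnull : ∀ B, MeasurableSet B → (∀ l, ν l B = 0) → μ B = 0)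
    {Z : Set X} (hZ : MeasurableSet Z) : ∀ᵐ x ∂μ.restrict Z, ν (π x) Z ≠ 0 := by
  have hB : MeasurableSet (Z ∩ {x | ν (π x) Z = 0}) :=
    hZ.inter (((Measure.measurable_coe hZ).comp hν).comp hπ (measurableSet_singleton 0))
  rw [ae_restrict_iff' hZ, ae_iff]
  convert hnull _ hB fun l => ?_ using 2
  · ext x; simp
  by_cases hl : ν l Z = 0
  · exact measure_mono_null inter_subset_left hl
  · refine measure_mono_null ?_ (hK l)
    rintro x ⟨-, hx⟩ rfl
    exact hl hx

lemma exists_nat_measure_preimage_ne_zero (hπ : Measurable π) (hν : Measurable ν)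
    (hnull : ∀ B, MeasurableSet B → (∀ l, ν l B = 0) → μ B = 0)
    {Z : Set X} (hZ : MeasurableSet Z) (hZ₀ : μ Z ≠ 0) :
    ∃ n : ℕ, μ (π ⁻¹' {l | 1 ≤ (n : ℝ≥0∞) * ν l Z}) ≠ 0 := by
  have : (ae (μ.restrict Z)).NeBot := ae_neBot.2 (by simpa using hZ₀)
  obtain ⟨n, hn⟩ :=
    (ae_restrict_leaf_measure_ne_zero hK hπ hν hnull hZ).frequently.exists_nat_one_le_mul
  exact ⟨n, fun h => frequently_ae_iff.1 hn (le_zero_iff.1 (h ▸ Measure.restrict_apply_le Z _))⟩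

lemma IsAdmissible.measure_preimage_eq_zero
    (hH : ∀ N : Set X, MeasurableSet N → μ N = 0 → ∀ᵐ l ∂(μ.map π), ν l N = 0)
    (hπ : Measurable π) {S : Set Λ} {f : X → ℝ} (hf : IsAdmissible μ ν π p S f) {A : Set Λ}
    (hA : MeasurableSet A) (hAS : A ⊆ S) (hf₀ : ∀ᵐ x ∂μ, x ∈ π ⁻¹' A → f x = 0) :
    μ (π ⁻¹' A) = 0 := by
  set N := π ⁻¹' A ∩ {x | f x ≠ 0}
  have hN : MeasurableSet N := (hπ hA).inter (hf.1 (measurableSet_singleton 0).compl)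
  have hμN : μ N = 0 :=
    measure_eq_zero_iff_ae_notMem.2 (hf₀.mono fun x hx hxN => hxN.2 (hx hxN.1))
  have hA₀ : ∀ᵐ l ∂μ.map π, l ∉ A := by
    filter_upwards [hH N hN hμN, hf.2.2.2] with l hlN hl hlA
    have hfl : ∀ᵐ x ∂ν l, ENNReal.ofReal (f x) = 0 := by
      filter_upwards [measure_eq_zero_iff_ae_notMem.1 hlN, ae_iff.2 (hK l)] with x hxN hx
      by_contra hfx
      exact hxN ⟨show π x ∈ A from hx ▸ hlA, fun h => hfx (by simp [h])⟩
    have h1 := hl (hAS hlA)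
    rw [lintegral_congr_ae hfl, lintegral_zero] at h1
    exact one_ne_zero (le_zero_iff.1 h1)
  rw [← Measure.map_apply hπ hA]
  exact measure_eq_zero_iff_ae_notMem.2 hA₀

lemma IsAdmissible.setLIntegral_ofReal_rpow_ne_zero
    (hH : ∀ N : Set X, MeasurableSet N → μ N = 0 → ∀ᵐ l ∂(μ.map π), ν l N = 0)
    (hπ : Measurable π) {S : Set Λ} {f : X → ℝ} (hf : IsAdmissible μ ν π p S f)
    {A : Set Λ} (hA : MeasurableSet A) (hAS : A ⊆ S) (hA₀ : μ (π ⁻¹' A) ≠ 0) :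
    ∫⁻ x in π ⁻¹' A, ENNReal.ofReal (f x) ^ p ∂μ ≠ 0 := by
  rw [ne_eq, setLIntegral_eq_zero_iff (hπ hA) (hf.1.ennreal_ofReal.pow_const p)]
  refine fun h => hA₀ (hf.measure_preimage_eq_zero hK hH hπ hA hAS (h.mono fun x hx hxA => ?_))
  have h0 := hx hxA
  simp only [ENNReal.rpow_eq_zero_iff, ENNReal.ofReal_eq_zero, ENNReal.ofReal_ne_top,
    false_and, or_false] at h0
  exact le_antisymm h0.1 (hf.2.1 x)

lemma IsAdmissible.piecewise_indicator (hπ : Measurable π) {S : Set Λ} {f : X → ℝ}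
    (hf : IsAdmissible μ ν π p S f) {A : Set Λ} (hA : MeasurableSet A)
    [DecidablePred (· ∈ π ⁻¹' A)] {Z : Set X} (hZ : MeasurableSet Z) (hZμ : μ Z ≠ ∞) {c : ℝ}
    (hc : 0 ≤ c) (hcZ : ∀ l ∈ A, 1 ≤ ENNReal.ofReal c * ν l Z) :
    IsAdmissible μ ν π p S ((π ⁻¹' A).piecewise (Z.indicator fun _ => c) f) := by
  refine ⟨(measurable_const.indicator hZ).piecewise (hπ hA) hf.1, fun x => ?_,
    .piecewise (hπ hA) ((memLp_indicator_const _ hZ c (.inr hZμ)).restrict _)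
      (hf.2.2.1.restrict _), ?_⟩
  · by_cases hx : x ∈ π ⁻¹' A
    · simp only [piecewise_eq_of_mem _ _ _ hx]
      exact indicator_nonneg (fun _ _ => hc) x
    · simp only [piecewise_eq_of_notMem _ _ _ hx]
      exact hf.2.1 x
  set g := (π ⁻¹' A).piecewise (Z.indicator fun _ => c) f
  filter_upwards [hf.2.2.2] with l hl hlS
  by_cases hlA : l ∈ A
  · have hgl : ∀ᵐ x ∂ν l, ENNReal.ofReal (g x) = Z.indicator (fun _ => ENNReal.ofReal c) x := by
      filter_upwards [ae_iff.2 (hK l)] with x hx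
      have hgx : g x = Z.indicator (fun _ => c) x :=
        piecewise_eq_of_mem _ _ _ (show x ∈ π ⁻¹' A by rwa [mem_preimage, hx])
      by_cases hxZ : x ∈ Z <;> simp [hgx, hxZ]
    rw [lintegral_congr_ae hgl, lintegral_indicator_const hZ]
    exact hcZ l hlA
  · have hgl : ∀ᵐ x ∂ν l, ENNReal.ofReal (g x) = ENNReal.ofReal (f x) := by
      filter_upwards [ae_iff.2 (hK l)] with x hx
      exact congrArg ENNReal.ofReal
        (piecewise_eq_of_notMem _ _ _ (show x ∉ π ⁻¹' A by rwa [mem_preimage, hx]))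
    rw [lintegral_congr_ae hgl]
    exact hl hlS

end Leaves

theorem statement2_general {X Λ : Type*} [MeasurableSpace X] [MeasurableSpace Λ]
    (μ : MeasureTheory.Measure X) [SigmaFinite μ] (ν : Λ → MeasureTheory.Measure X)
    (π : X → Λ) (hπ : Measurable π) (hν : Measurable ν)
    (hK : ∀ l : Λ, ν l {x | π x ≠ l} = 0)
    (hH : ∀ N : Set X, MeasurableSet N → μ N = 0 → ∀ᵐ l ∂(μ.map π), ν l N = 0)
    (p : ℝ) (hp : 1 < p)
    -- the abstract coarea formula
    (σ : MeasureTheory.Measure Λ)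
    (w : X → ℝ)
    (hcoarea : ∀ h : X → ℝ≥0∞, Measurable h →
      ∫⁻ x, h x ∂μ = ∫⁻ l, (∫⁻ x, h x * ENNReal.ofReal (w x) ∂(ν l)) ∂σ)
    (f₀ : X → ℝ) (hf₀ : IsExtremal μ ν π p f₀) :
    ∀ᵐ x ∂μ, 0 < f₀ x := by
  classical
  have hp₀ : 0 < p := by linarith
  obtain ⟨hf₀m, hf₀nn, hf₀p, -⟩ := hf₀.1
  by_contra hpos
  simp only [ae_iff, not_lt] at hpos
  obtain ⟨Z, hZm, hZf₀, hZpos, hZμ⟩ := Measure.exists_subset_measure_lt_top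
    (measurableSet_le hf₀m measurable_const) (pos_iff_ne_zero.2 hpos)
  have hnull := fun B hB => measure_eq_zero_of_forall_leaf_eq_zero hcoarea (B := B) hB
  obtain ⟨n, hn⟩ := exists_nat_measure_preimage_ne_zero hK hπ hν hnull hZm hZpos.ne'
  set A := {l | 1 ≤ (n : ℝ≥0∞) * ν l Z}
  have hA : MeasurableSet A :=
    measurableSet_le measurable_const (((Measure.measurable_coe hZm).comp hν).const_mul _)
  set g := (π ⁻¹' A).piecewise (Z.indicator fun _ => (n : ℝ)) f₀
  have hg : IsAdmissible μ ν π p univ g :=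
    hf₀.1.piecewise_indicator hK hπ hA hZm hZμ.ne n.cast_nonneg (by simp [A])
  have hf₀g : ∀ x ∈ π ⁻¹' A, f₀ x = 0 ∨ g x = 0 := fun x hx => by
    by_cases hxZ : x ∈ Z
    · exact .inl (le_antisymm (hZf₀ hxZ) (hf₀nn x))
    · exact .inr (by simp [g, piecewise_eq_of_mem _ _ _ hx, hxZ])
  obtain ⟨t, ht, hlt⟩ := exists_lintegral_ofReal_rpow_convexComb_lt hf₀m (hπ hA)
    (fun x hx => piecewise_eq_of_notMem _ _ _ hx) hf₀g hp
    (lintegral_ofReal_rpow_ne_top hp₀ hf₀nn hf₀p) (lintegral_ofReal_rpow_ne_top hp₀ hg.2.1 hg.2.2.1)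
    (hf₀.1.setLIntegral_ofReal_rpow_ne_zero hK hH hπ hA (subset_univ _) hn)
  have hcomb : IsAdmissible μ ν π p univ ((1 - t) • f₀ + t • g) :=
    convex_setOf_isAdmissible univ hf₀.1 hg (by linarith [ht.2]) ht.1.le (by ring)
  exact (hlt.trans_le (hf₀.lintegral_ofReal_rpow_le hp₀ hcomb)).false

/-- Under the abstract coarea formula, an extremal function for the p-modulus is
positive μ-almost everywhere. -/
theorem statement2 {X Λ : Type*} [MeasurableSpace X] [MeasurableSpace Λ]
    (μ : MeasureTheory.Measure X) [SigmaFinite μ] (ν : Λ → MeasureTheory.Measure X)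
    (π : X → Λ) (hπ : Measurable π) (hν : Measurable ν)
    (hK : ∀ l : Λ, ν l {x | π x ≠ l} = 0)
    (hH : ∀ N : Set X, MeasurableSet N → μ N = 0 → ∀ᵐ l ∂(μ.map π), ν l N = 0)
    (p : ℝ) (hp : 1 < p)
    -- the abstract coarea formula
    (σ : MeasureTheory.Measure Λ) [SigmaFinite σ]
    (c₁ c₂ : ℝ) (hc₁ : 0 < c₁) (hc₁₂ : c₁ ≤ c₂)
    (w : X → ℝ) (hw : Measurable w) (hw₁ : ∀ x, c₁ ≤ w x) (hw₂ : ∀ x, w x ≤ c₂)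
    (hcoarea : ∀ h : X → ℝ≥0∞, Measurable h →
      ∫⁻ x, h x ∂μ = ∫⁻ l, (∫⁻ x, h x * ENNReal.ofReal (w x) ∂(ν l)) ∂σ)
    (f₀ : X → ℝ) (hf₀ : IsExtremal μ ν π p f₀) :
    ∀ᵐ x ∂μ, 0 < f₀ x :=
  statement2_general μ ν π hπ hν hK hH p hp σ w hcoarea f₀ hf₀
end

section
/- Assume there exists an extremal function for the p-modulus mod_p(F). Then for every φ ∈ L^p(μ) one has ∫_X |φ| dν_λ < ∞ for π_*μ-almost every λ ∈ Λ (i.e. φ is integrable over almost every leaf). -/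
open MeasureTheory ENNReal

/-!
If `∫ |φ| dν_λ = ∞` on a set `S` of leaves of positive measure, modify the extremal function `f₀`
on the union `T = π⁻¹ S` of these leaves, replacing it by `ε |φ|`. The leaf integrals over `S`
stay infinite and the others are unchanged, so the new function is still admissible. By (H) and
(K), `f₀` cannot vanish almost everywhere on `T` (it would then vanish on almost every leaf of
`S`), so `∫_T f₀ ^ p > 0`, whereas `∫_T (ε |φ|) ^ p → 0` as `ε → 0`: for small `ε` the
competitor has smaller `L^p` norm than `f₀`, contradicting extremality.
-/

open Filter Set

section LpPatching

variable {α : Type*} [MeasurableSpace α] {μ : Measure α} {p : ℝ≥0∞}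

lemma eLpNorm_piecewise_lt {E : Type*} [NormedAddCommGroup E] {s : Set α}
    [DecidablePred (· ∈ s)] (hs : MeasurableSet s) {f g : α → E} (hp0 : p ≠ 0) (hp : p ≠ ∞)
    (hf : eLpNorm f p μ ≠ ∞)
    (hlt : eLpNorm g p (μ.restrict s) < eLpNorm f p (μ.restrict s)) :
    eLpNorm (s.piecewise g f) p μ < eLpNorm f p μ := by
  have hq : 0 < 1 / p.toReal := one_div_pos.2 (ENNReal.toReal_pos hp0 hp)
  simp only [eLpNorm_eq_lintegral_rpow_enorm_toReal hp0 hp, ENNReal.rpow_lt_rpow_iff hq] at hlt ⊢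
  have hfc : ∫⁻ x in sᶜ, ‖f x‖ₑ ^ p.toReal ∂μ ≠ ∞ :=
    ((setLIntegral_le_lintegral _ _).trans_lt
      (lintegral_rpow_enorm_lt_top_of_eLpNorm_lt_top hp0 hp hf.lt_top)).ne
  calc ∫⁻ x, ‖s.piecewise g f x‖ₑ ^ p.toReal ∂μ
      = ∫⁻ x in s, ‖g x‖ₑ ^ p.toReal ∂μ + ∫⁻ x in sᶜ, ‖f x‖ₑ ^ p.toReal ∂μ := by
        rw [← lintegral_piecewise hs]
        exact lintegral_congr fun x => apply_piecewise _ _ _ fun _ y => ‖y‖ₑ ^ p.toReal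
    _ < ∫⁻ x in s, ‖f x‖ₑ ^ p.toReal ∂μ + ∫⁻ x in sᶜ, ‖f x‖ₑ ^ p.toReal ∂μ :=
        ENNReal.add_lt_add_right hfc hlt
    _ = ∫⁻ x, ‖f x‖ₑ ^ p.toReal ∂μ := lintegral_add_compl _ hs

lemma exists_pos_eLpNorm_smul_lt {E F : Type*} [NormedAddCommGroup E] [NormedSpace ℝ E]
    [NormedAddCommGroup F] {f : α → F} {g : α → E} (hg : eLpNorm g p μ ≠ ∞)
    (hf : eLpNorm f p μ ≠ 0) : ∃ ε : ℝ, 0 < ε ∧ eLpNorm (ε • g) p μ < eLpNorm f p μ := by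
  obtain ⟨ε, hε, hlt⟩ := ENNReal.exists_nnreal_pos_mul_lt hg hf
  refine ⟨ε, hε, ?_⟩
  rwa [eLpNorm_const_smul, Real.enorm_eq_ofReal ε.coe_nonneg, ENNReal.ofReal_coe_nnreal]

end LpPatching

lemma piecewise_preimage_ae_eq {X Λ β : Type*} [MeasurableSpace X] {ν : Measure X}
    {π : X → Λ} {l : Λ} (hl : ν {x | π x ≠ l} = 0) (S : Set Λ) [DecidablePred (· ∈ S)]
    [DecidablePred (· ∈ π ⁻¹' S)] (g f : X → β) :
    (π ⁻¹' S).piecewise g f =ᵐ[ν] if l ∈ S then g else f := by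
  filter_upwards [ae_iff.2 hl] with x hx
  by_cases hlS : l ∈ S <;> simp [hx, hlS]

section Leaves

variable {X Λ : Type*} [MeasurableSpace X] [MeasurableSpace Λ] {μ : Measure X}
  {ν : Λ → Measure X} {π : X → Λ} {p : ℝ}

lemma ae_leaf_ae_eq_zero_of_ae_restrict_preimage (hπ : Measurable π)
    (hK : ∀ l : Λ, ν l {x | π x ≠ l} = 0)
    (hH : ∀ N : Set X, MeasurableSet N → μ N = 0 → ∀ᵐ l ∂(μ.map π), ν l N = 0)
    {S : Set Λ} (hS : MeasurableSet S) {f : X → ℝ} (hf : Measurable f)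
    (h0 : f =ᵐ[μ.restrict (π ⁻¹' S)] 0) :
    ∀ᵐ l ∂(μ.map π), l ∈ S → f =ᵐ[ν l] 0 := by
  have hN : MeasurableSet ({x | f x ≠ 0} ∩ π ⁻¹' S) :=
    (hf (measurableSet_singleton 0)).compl.inter (hπ hS)
  have hμN : μ ({x | f x ≠ 0} ∩ π ⁻¹' S) = 0 := by
    rwa [EventuallyEq, ae_iff, Measure.restrict_apply' (hπ hS)] at h0
  filter_upwards [hH _ hN hμN] with l hl hlS
  filter_upwards [ae_iff.2 (hK l), measure_eq_zero_iff_ae_notMem.1 hl] with x hx hxN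
  by_contra hfx
  exact hxN ⟨hfx, show π x ∈ S from hx ▸ hlS⟩

lemma IsAdmissible.mono {S S' : Set Λ} {f : X → ℝ} (hSS' : S ⊆ S')
    (hf : IsAdmissible μ ν π p S' f) : IsAdmissible μ ν π p S f :=
  ⟨hf.1, hf.2.1, hf.2.2.1, hf.2.2.2.mono fun _ hl hlS => hl (hSS' hlS)⟩

lemma IsAdmissible.not_ae_eq_zero_restrict_preimage (hπ : Measurable π)
    (hK : ∀ l : Λ, ν l {x | π x ≠ l} = 0)
    (hH : ∀ N : Set X, MeasurableSet N → μ N = 0 → ∀ᵐ l ∂(μ.map π), ν l N = 0)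
    {S : Set Λ} (hS : MeasurableSet S) (hSμ : μ.map π S ≠ 0) {f : X → ℝ}
    (hf : IsAdmissible μ ν π p S f) : ¬ f =ᵐ[μ.restrict (π ⁻¹' S)] 0 := by
  intro h0
  obtain ⟨l, hlS, hl1, hl0⟩ := ((frequently_ae_mem_iff.2 hSμ).and_eventually
    (hf.2.2.2.and (ae_leaf_ae_eq_zero_of_ae_restrict_preimage hπ hK hH hS hf.1 h0))).exists
  have : ∫⁻ x, ENNReal.ofReal (f x) ∂ν l = 0 :=
    (lintegral_eq_zero_iff hf.1.ennreal_ofReal).2 ((hl0 hlS).mono fun x hx => by simp [hx])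
  simpa [this] using hl1 hlS

lemma IsAdmissible.piecewise_preimage (hπ : Measurable π)
    (hK : ∀ l : Λ, ν l {x | π x ≠ l} = 0) {S S' : Set Λ} [DecidablePred (· ∈ S)]
    [DecidablePred (· ∈ π ⁻¹' S)] (hS : MeasurableSet S) {f g : X → ℝ}
    (hf : IsAdmissible μ ν π p S' f) (hg : Measurable g) (hg0 : ∀ x, 0 ≤ g x)
    (hgp : MemLp g (ENNReal.ofReal p) μ) (hgS : ∀ l ∈ S, 1 ≤ ∫⁻ x, ENNReal.ofReal (g x) ∂ν l) :
    IsAdmissible μ ν π p S' ((π ⁻¹' S).piecewise g f) := by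
  refine ⟨hg.piecewise (hπ hS) hf.1, fun x => ?_,
    (hgp.restrict _).piecewise (hπ hS) (hf.2.2.1.restrict _), ?_⟩
  · by_cases hx : x ∈ π ⁻¹' S <;> simp [hx, hg0 x, hf.2.1 x]
  filter_upwards [hf.2.2.2] with l hl hlS'
  rw [lintegral_congr_ae ((piecewise_preimage_ae_eq (hK l) S g f).mono
    fun x hx => congrArg ENNReal.ofReal hx)]
  by_cases hlS : l ∈ S <;> simp [hlS, hgS, hl hlS']

end Leaves

theorem statement3_general {X Λ : Type*} [MeasurableSpace X] [MeasurableSpace Λ]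
    (μ : MeasureTheory.Measure X) (ν : Λ → MeasureTheory.Measure X)
    (π : X → Λ) (hπ : Measurable π) (hν : Measurable ν)
    (hK : ∀ l : Λ, ν l {x | π x ≠ l} = 0)
    (hH : ∀ N : Set X, MeasurableSet N → μ N = 0 → ∀ᵐ l ∂(μ.map π), ν l N = 0)
    (p : ℝ) (hp : 1 < p)
    (hext : ∃ f₀, IsExtremal μ ν π p f₀) :
    ∀ φ : X → ℝ, Measurable φ → MemLp φ (ENNReal.ofReal p) μ →
      ∀ᵐ l ∂(μ.map π), ∫⁻ x, ENNReal.ofReal |φ x| ∂(ν l) < ⊤ := by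
  classical
  intro φ hφ hφp
  obtain ⟨f₀, hf₀, hf₀_eq⟩ := hext
  have hp0 : ENNReal.ofReal p ≠ 0 := (ENNReal.ofReal_pos.2 (by linarith)).ne'
  set S := {l | ∫⁻ x, ENNReal.ofReal |φ x| ∂ν l = ∞}
  have hS : MeasurableSet S :=
    (Measure.measurable_lintegral (by fun_prop)).comp hν (measurableSet_singleton ∞)
  suffices μ.map π S = 0 by simpa [ae_iff, lt_top_iff_ne_top] using this
  by_contra hSμ
  have hf₀S : eLpNorm f₀ (ENNReal.ofReal p) (μ.restrict (π ⁻¹' S)) ≠ 0 := fun h =>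
    ((hf₀.mono (subset_univ S)).not_ae_eq_zero_restrict_preimage hπ hK hH hS hSμ)
      ((eLpNorm_eq_zero_iff hf₀.1.aestronglyMeasurable hp0).1 h)
  obtain ⟨ε, hε, hεlt⟩ := exists_pos_eLpNorm_smul_lt
    ((hφp.abs.restrict (π ⁻¹' S)).eLpNorm_ne_top) hf₀S
  have hadm := hf₀.piecewise_preimage hπ hK hS (g := fun x => ε * |φ x|) (by fun_prop)
    (fun x => by positivity) (hφp.abs.const_mul ε) fun l hl => by
      simp_rw [ENNReal.ofReal_mul hε.le, lintegral_const_mul' _ _ ENNReal.ofReal_ne_top]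
      simp [hε, show _ = ∞ from hl]
  have hlt := eLpNorm_piecewise_lt (hπ hS) hp0 ENNReal.ofReal_ne_top hf₀.2.2.1.eLpNorm_ne_top hεlt
  exact ((iInf₂_le _ hadm).trans_lt hlt).ne hf₀_eq.symm

/-- If an extremal function for the p-modulus exists, then every φ ∈ L^p(μ) is
integrable over π_*μ-almost every leaf. -/
theorem statement3 {X Λ : Type*} [MeasurableSpace X] [MeasurableSpace Λ]
    (μ : MeasureTheory.Measure X) [SigmaFinite μ] (ν : Λ → MeasureTheory.Measure X)
    (π : X → Λ) (hπ : Measurable π) (hν : Measurable ν)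
    (hK : ∀ l : Λ, ν l {x | π x ≠ l} = 0)
    (hH : ∀ N : Set X, MeasurableSet N → μ N = 0 → ∀ᵐ l ∂(μ.map π), ν l N = 0)
    (p : ℝ) (hp : 1 < p)
    (hext : ∃ f₀, IsExtremal μ ν π p f₀) :
    ∀ φ : X → ℝ, Measurable φ → MemLp φ (ENNReal.ofReal p) μ →
      ∀ᵐ l ∂(μ.map π), ∫⁻ x, ENNReal.ofReal |φ x| ∂(ν l) < ⊤ :=
  statement3_general μ ν π hπ hν hK hH p hp hext
end
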